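/- arXiv:2304.07831 — 3 statements merged into one kernel-verified Lean document; each statement's English description precedes it below -/
import Mathlib

section
/- Let W, V be vector spaces with quasi-norms |·|_W, |·|_V, and let T : W → V satisfy the quasi-additivity condition |T(f+g)|_V ≤ K(|T(f)|_V + |T(g)|_V) for all f, g ∈ W and some constant K ≥ 1, and suppose T is continuous at zero (for each ε>0 there is δ>0 with |f|_W < δ ⟹ |T(f)|_V < ε). Let α > 0 satisfy (2K)^α = 2. Then for every series ∑_{j∈ℤ} f_j converging in W, one has |T(∑_j f_j)|_V^α ≤ 4 ∑_j |T(f_j)|_V^α. -/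
/-!
Since `(2K)^α = 2`, the function `φ = |T ·|_V^α` satisfies `φ(x + y) ≤ 2 max (φ x) (φ y)`.
For such a `φ`, round each `φ(xᵢ)` up to a power of two `2^kᵢ`. Two equal budgets `2^k` can be
merged into one budget `2^(k+1)` without changing their total, and once all budgets are distinct the
smaller ones add up to less than the largest; by induction `φ(∑ xᵢ) ≤ 2^m` whenever
`∑ 2^kᵢ < 2^m`, which gives `φ(∑ xᵢ) ≤ 4 ∑ φ(xᵢ)` for finite sums. For the series, write `g` as a
symmetric partial sum plus a tail, whose contribution vanishes by continuity of `T` at zero.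
-/

theorem Multiset.exists_eq_cons_cons_of_not_nodup_map {α β : Type*} (f : α → β) (s : Multiset α)
    (h : ¬ (s.map f).Nodup) : ∃ a b t, s = a ::ₘ b ::ₘ t ∧ f a = f b := by
  induction s using Multiset.induction_on with
  | empty => simp at h
  | cons c s ih =>
    rw [Multiset.map_cons, Multiset.nodup_cons, not_and_or, not_not] at h
    rcases h with hc | hs
    · obtain ⟨b, hb, hbc⟩ := Multiset.mem_map.mp hc
      obtain ⟨t, rfl⟩ := Multiset.exists_cons_of_mem hb
      exact ⟨c, b, t, rfl, hbc.symm⟩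
    · obtain ⟨a, b, t, rfl, hab⟩ := ih hs
      exact ⟨a, b, c ::ₘ t, by simp only [Multiset.cons_swap c], hab⟩

section

variable {W : Type*} [AddCommGroup W] {ρ : W → ℝ}

theorem le_two_pow_of_sum_two_pow_lt (hρ : ∀ x y, ρ (x + y) ≤ 2 * max (ρ x) (ρ y))
    (l : Multiset (W × ℕ)) (hl : l ≠ 0) (hdom : ∀ p ∈ l, ρ p.1 ≤ 2 ^ p.2) {m : ℕ}
    (hsum : (l.map fun p => 2 ^ p.2).sum < 2 ^ m) : ρ (l.map Prod.fst).sum ≤ 2 ^ m := by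
  induction hn : Multiset.card l using Nat.strong_induction_on generalizing l m with
  | _ n ih =>
  subst hn
  classical
  by_cases hnd : (l.map Prod.snd).Nodup
  · obtain ⟨p, hp, hmax⟩ := l.toFinset.exists_max_image Prod.snd (by simpa using hl)
    rw [Multiset.mem_toFinset] at hp
    obtain ⟨t, rfl⟩ := Multiset.exists_cons_of_mem hp
    rw [Multiset.map_cons, Multiset.nodup_cons] at hnd
    have hpm : p.2 < m := by
      rw [Multiset.map_cons, Multiset.sum_cons] at hsum
      exact (Nat.pow_lt_pow_iff_right (a := 2) (by norm_num)).mp (by omega)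
    rcases eq_or_ne t 0 with rfl | ht
    · simpa using (hdom p (by simp)).trans (pow_le_pow_right₀ (by norm_num) hpm.le)
    have htp : (t.map fun q => 2 ^ q.2).sum < 2 ^ p.2 := by
      have := Nat.geomSum_lt (s := ⟨t.map Prod.snd, hnd.2⟩) le_rfl fun k hk => by
        obtain ⟨q, hq, rfl⟩ := Multiset.mem_map.mp hk
        exact (hmax q (by simp [hq])).lt_of_ne fun h => hnd.1 (h ▸ Multiset.mem_map_of_mem _ hq)
      simpa [Finset.sum, Multiset.map_map] using this
    have ht_le := ih _ (by simp) t ht (fun q hq => hdom q (by simp [hq])) htp rfl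
    calc ρ ((p ::ₘ t).map Prod.fst).sum = ρ (p.1 + (t.map Prod.fst).sum) := by simp
      _ ≤ 2 * max (ρ p.1) (ρ (t.map Prod.fst).sum) := hρ _ _
      _ ≤ 2 * 2 ^ p.2 := by gcongr; exact max_le (hdom p (by simp)) ht_le
      _ ≤ 2 ^ m := by rw [← pow_succ']; exact pow_le_pow_right₀ (by norm_num) hpm
  · obtain ⟨a, b, t, rfl, hab⟩ := Multiset.exists_eq_cons_cons_of_not_nodup_map _ _ hnd
    have hmerge : ρ (a.1 + b.1) ≤ 2 ^ (a.2 + 1) := by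
      calc ρ (a.1 + b.1) ≤ 2 * max (ρ a.1) (ρ b.1) := hρ _ _
        _ ≤ 2 * 2 ^ a.2 := by
          gcongr; exact max_le (hdom a (by simp)) (hab ▸ hdom b (by simp))
        _ = 2 ^ (a.2 + 1) := by ring
    have := ih _ (by simp) ((a.1 + b.1, a.2 + 1) ::ₘ t) (by simp)
      (by simpa [hmerge] using fun q hq => hdom q (by simp [hq]))
      (by simpa [pow_succ, hab, mul_two, add_assoc] using hsum) rfl
    simpa [add_assoc] using this

theorem exists_two_pow_between {x : ℝ} (hx : 0 ≤ x) :
    ∃ k : ℕ, x ≤ 2 ^ k ∧ (2 : ℝ) ^ k ≤ 2 * x + 1 := by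
  rcases lt_or_ge x 1 with h | h
  · exact ⟨0, by simpa using h.le, by simpa using hx⟩
  · obtain ⟨n, hn, hn'⟩ := exists_nat_pow_near h one_lt_two
    exact ⟨n + 1, hn'.le, by rw [pow_succ]; linarith⟩

theorem apply_sum_le_four_mul_sum_add_two_mul_card (hρ0 : ∀ x, 0 ≤ ρ x)
    (hρ : ∀ x y, ρ (x + y) ≤ 2 * max (ρ x) (ρ y)) (l : Multiset W) (hl : l ≠ 0) :
    ρ l.sum ≤ 4 * (l.map ρ).sum + 2 * Multiset.card l := by
  choose k hk using fun x => exists_two_pow_between (hρ0 x)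
  set S := (l.map fun x => 2 ^ k x).sum
  have hS : S ≠ 0 := by
    simpa [S, Multiset.sum_eq_zero_iff] using Multiset.exists_mem_of_ne_zero hl
  have hbound := le_two_pow_of_sum_two_pow_lt hρ (l.map fun x => (x, k x)) (by simpa using hl)
    (by simpa using fun x _ => (hk x).1) (m := Nat.log 2 S + 1)
    (by simpa [Multiset.map_map] using Nat.lt_pow_succ_log_self one_lt_two S)
  calc ρ l.sum ≤ 2 ^ (Nat.log 2 S + 1) := by simpa [Multiset.map_map] using hbound
    _ ≤ 2 * (S : ℝ) := by
      rw [pow_succ']; exact_mod_cast Nat.mul_le_mul_left 2 (Nat.pow_log_le_self 2 hS)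
    _ ≤ 2 * (l.map fun x => 2 * ρ x + 1).sum := by
      simp only [S, Nat.cast_multiset_sum, Multiset.map_map, Function.comp_def, Nat.cast_pow,
        Nat.cast_ofNat]
      gcongr
      exact Multiset.sum_map_le_sum_map _ _ fun x _ => (hk x).2
    _ = 4 * (l.map ρ).sum + 2 * Multiset.card l := by
      simp [Multiset.sum_map_add, Multiset.sum_map_mul_left]; ring

theorem apply_sum_le_four_mul_sum (hρ0 : ∀ x, 0 ≤ ρ x)
    (hρ : ∀ x y, ρ (x + y) ≤ 2 * max (ρ x) (ρ y)) (l : Multiset W) (hl : l ≠ 0) :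
    ρ l.sum ≤ 4 * (l.map ρ).sum := by
  refine le_of_forall_pos_le_add fun ε hε => ?_
  have hn : (0 : ℝ) < Multiset.card l := by exact_mod_cast Multiset.card_pos.mpr hl
  set u := ε / (2 * Multiset.card l)
  have hu : 0 < u := by positivity
  have := apply_sum_le_four_mul_sum_add_two_mul_card (ρ := fun x => ρ x / u)
    (fun x => div_nonneg (hρ0 x) hu.le)
    (fun x y => by rw [max_div_div_right hu.le, ← mul_div_assoc]; gcongr; exact hρ x y) l hl
  rw [Multiset.sum_map_div, div_le_iff₀ hu] at this
  calc ρ l.sum ≤ (4 * ((l.map ρ).sum / u) + 2 * Multiset.card l) * u := this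
    _ = 4 * (l.map ρ).sum + ε := by simp only [u]; field_simp

theorem ofReal_apply_add_sum_le_four_mul_tsum {ι : Type*} (hρ0 : ∀ x, 0 ≤ ρ x)
    (hρ : ∀ x y, ρ (x + y) ≤ 2 * max (ρ x) (ρ y)) (y : W) (s : Finset ι) (x : ι → W) :
    ENNReal.ofReal (ρ (y + ∑ i ∈ s, x i)) ≤
      4 * (ENNReal.ofReal (ρ y) + ∑' i, ENNReal.ofReal (ρ (x i))) := by
  have hfin : ρ (y + ∑ i ∈ s, x i) ≤ 4 * (ρ y + ∑ i ∈ s, ρ (x i)) := by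
    simpa only [Multiset.map_cons, Multiset.sum_cons, Multiset.map_map, Function.comp_def,
      ← Finset.sum_eq_multiset_sum] using
      apply_sum_le_four_mul_sum hρ0 hρ (y ::ₘ s.val.map x) Multiset.cons_ne_zero
  calc ENNReal.ofReal (ρ (y + ∑ i ∈ s, x i))
      ≤ ENNReal.ofReal (4 * (ρ y + ∑ i ∈ s, ρ (x i))) := ENNReal.ofReal_le_ofReal hfin
    _ = 4 * (ENNReal.ofReal (ρ y) + ∑ i ∈ s, ENNReal.ofReal (ρ (x i))) := by
      rw [ENNReal.ofReal_mul zero_le_four, ENNReal.ofReal_add (hρ0 _)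
        (Finset.sum_nonneg fun i _ => hρ0 _), ENNReal.ofReal_sum_of_nonneg fun i _ => hρ0 _,
        ENNReal.ofReal_ofNat]
    _ ≤ 4 * (ENNReal.ofReal (ρ y) + ∑' i, ENNReal.ofReal (ρ (x i))) := by
      gcongr; exact ENNReal.sum_le_tsum _

end

theorem rpow_le_rpow_two_mul_mul_max {a b c K α : ℝ} (ha : 0 ≤ a) (hb : 0 ≤ b) (hc : 0 ≤ c)
    (hK : 0 ≤ K) (hα : 0 ≤ α) (h : c ≤ K * (a + b)) :
    c ^ α ≤ (2 * K) ^ α * max (a ^ α) (b ^ α) := by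
  rw [← Real.rpow_max ha hb hα, ← Real.mul_rpow (by positivity) (le_max_of_le_left ha)]
  gcongr
  calc c ≤ K * (a + b) := h
    _ ≤ K * (2 * max a b) := by gcongr; linarith [le_max_left a b, le_max_right a b]
    _ = 2 * K * max a b := by ring

open Filter Topology

theorem stmt4_general {W V : Type*} [AddCommGroup W] [AddCommGroup V]
    -- quasi-norms on `W` and `V`
    (nW : W → ℝ) (nV : V → ℝ)
    (hnV0 : ∀ v, 0 ≤ nV v)
    (T : W → V) (K : ℝ) (hK : 1 ≤ K)
    -- quasi-additivity of `T`
    (hquasi : ∀ f g : W, nV (T (f + g)) ≤ K * (nV (T f) + nV (T g)))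
    -- continuity at zero
    (hcont : ∀ ε > (0 : ℝ), ∃ δ > (0 : ℝ), ∀ f : W, nW f < δ → nV (T f) < ε)
    (α : ℝ) (hα : 0 < α) (hKα : (2 * K) ^ α = 2)
    (f : ℤ → W) (g : W)
    -- the series `∑_{j ∈ ℤ} f_j` converges to `g` in the quasi-norm of `W`
    (hconv : Tendsto (fun N : ℕ => nW (g - ∑ j ∈ Finset.Icc (-(N : ℤ)) (N : ℤ), f j))
      atTop (𝓝 0)) :
    ENNReal.ofReal (nV (T g) ^ α) ≤ 4 * ∑' j : ℤ, ENNReal.ofReal (nV (T (f j)) ^ α) := by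
  set φ : W → ℝ := fun w => nV (T w) ^ α
  have hφ0 : ∀ w, 0 ≤ φ w := fun w => Real.rpow_nonneg (hnV0 _) _
  have hφ : ∀ x y, φ (x + y) ≤ 2 * max (φ x) (φ y) := fun x y => by
    simpa [φ, hKα] using rpow_le_rpow_two_mul_mul_max (hnV0 (T x)) (hnV0 (T y)) (hnV0 _)
      (by linarith) hα.le (hquasi x y)
  set tail : ℕ → W := fun N => g - ∑ j ∈ Finset.Icc (-(N : ℤ)) N, f j
  have htail : Tendsto (fun N => nV (T (tail N))) atTop (𝓝 0) := by
    refine tendsto_order.2 ⟨fun a ha => .of_forall fun N => ha.trans_le (hnV0 _), fun ε hε => ?_⟩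
    obtain ⟨δ, hδ, hT⟩ := hcont ε hε
    exact (hconv.eventually (gt_mem_nhds hδ)).mono fun N hN => hT _ hN
  have hlim : Tendsto (fun N => 4 * (ENNReal.ofReal (φ (tail N)) + ∑' j, ENNReal.ofReal (φ (f j))))
      atTop (𝓝 (4 * ∑' j, ENNReal.ofReal (φ (f j)))) := by
    have hφtail := ENNReal.tendsto_ofReal (htail.rpow_const (.inr hα.le))
    simpa [Real.zero_rpow hα.ne'] using
      ENNReal.Tendsto.const_mul (hφtail.add_const _) (.inr ENNReal.ofNat_ne_top)
  refine ge_of_tendsto' hlim fun N => ?_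
  simpa [tail] using
    ofReal_apply_add_sum_le_four_mul_tsum hφ0 hφ (tail N) (Finset.Icc (-(N : ℤ)) N) f

/-- A quasi-additive map between quasi-normed spaces that is continuous at zero is
countably `α`-quasi-additive with constant `4`, where `(2K)^α = 2`. -/
theorem stmt4 {W V : Type*} [AddCommGroup W] [Module ℝ W] [AddCommGroup V] [Module ℝ V]
    -- quasi-norms on `W` and `V`
    (nW : W → ℝ) (nV : V → ℝ)
    (hnW0 : ∀ w, 0 ≤ nW w) (hnWtri : ∃ CW ≥ (1 : ℝ), ∀ w w', nW (w + w') ≤ CW * (nW w + nW w'))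
    (hnV0 : ∀ v, 0 ≤ nV v) (hnVtri : ∃ CV ≥ (1 : ℝ), ∀ v v', nV (v + v') ≤ CV * (nV v + nV v'))
    (T : W → V) (K : ℝ) (hK : 1 ≤ K)
    -- quasi-additivity of `T`
    (hquasi : ∀ f g : W, nV (T (f + g)) ≤ K * (nV (T f) + nV (T g)))
    -- continuity at zero
    (hcont : ∀ ε > (0 : ℝ), ∃ δ > (0 : ℝ), ∀ f : W, nW f < δ → nV (T f) < ε)
    (α : ℝ) (hα : 0 < α) (hKα : (2 * K) ^ α = 2)
    (f : ℤ → W) (g : W)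
    -- the series `∑_{j ∈ ℤ} f_j` converges to `g` in the quasi-norm of `W`
    (hconv : Tendsto (fun N : ℕ => nW (g - ∑ j ∈ Finset.Icc (-(N : ℤ)) (N : ℤ), f j))
      atTop (𝓝 0)) :
    ENNReal.ofReal (nV (T g) ^ α) ≤ 4 * ∑' j : ℤ, ENNReal.ofReal (nV (T (f j)) ^ α) :=
  stmt4_general nW nV hnV0 T K hK hquasi hcont α hα hKα f g hconv
end

section
/- Let (X,μ), (Y,ν) be σ-finite measure spaces, 0 < p < ∞, 0 < q ≤ ∞. Let T be quasi-additive on L^p(X) with constant K ≥ 1 (|T(f+g)| ≤ K(|T(f)|+|T(g)|) ν-a.e.) and of weak-type (p,q). Let α > 0 satisfy (2K)^α = 2. Then whenever ∑_j f_j converges in L^p(X), one has |T(∑_j f_j)|^α ≤ 4 ∑_j |T(f_j)|^α ν-a.e. -/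
open MeasureTheory Filter Set Topology ENNReal

noncomputable section
namespace Paper

variable {α ε : Type*} [MeasurableSpace α]

/-- Decreasing rearrangement of `f` with respect to `μ`. -/
def rearr [NNNorm ε] (μ : Measure α) (f : α → ε) (t : ℝ≥0∞) : ℝ≥0∞ :=
  sInf {s : ℝ≥0∞ | μ {x | s < (‖f x‖₊ : ℝ≥0∞)} ≤ t}

/-- Lorentz quasinorm `‖f‖_{L^{p,q}(μ)}` (with the convention `L^{∞,q} = L^∞`). -/
def lorentzNorm [NNNorm ε] (μ : Measure α) (p q : ℝ≥0∞) (f : α → ε) : ℝ≥0∞ :=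
  if p = ∞ then rearr μ f 0
  else if q = ∞ then ⨆ t : ℝ≥0∞, t ^ (1 / p).toReal * rearr μ f t
  else (∫⁻ t in Ioi (0 : ℝ),
      (ENNReal.ofReal t ^ (1 / p).toReal * rearr μ f (ENNReal.ofReal t)) ^ q.toReal
        / ENNReal.ofReal t) ^ (1 / q.toReal)

/-!
Since `‖T (f + g)‖ ≤ K (‖T f‖ + ‖T g‖) ≤ 2K max (‖T f‖, ‖T g‖)` and `(2K)^α = 2`, the set function
`N S = ‖T (∑_{i ∈ S} f_i)‖^α` satisfies `N (S ∪ S') ≤ 2 max (N S, N S')` for disjoint `S, S'`.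
Round each `N {i}` up to `c 2^{k_i}`. A sum of powers of two bounded by `2^{z+1}` splits into two
halves bounded by `2^z` (its smallest term divides every partial sum), so recursive halving gives
`N S ≤ c 2^z` whenever `∑_{i ∈ S} 2^{k_i} ≤ 2^z`; choosing `z` minimal and letting `c → 0` yields
`N S ≤ 4 ∑_{i ∈ S} N {i}` for finite sums.

For the series, apply this to `f_0, …, f_{N-1}` and the tail `F - ∑_{j < N} f_j`. The weak-type
bound turns `L^p` convergence of the tails into convergence in measure of their images under `T`,
and along an a.e. convergent subsequence the contribution of the tail vanishes.
-/

section AokiRolewicz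

open Finset

variable {ι : Type*} [DecidableEq ι]

lemma add_le_or_add_le_of_dvd {d a b n : ℕ} (hd : 0 < d) (ha : d ∣ a) (hb : d ∣ b) (hn : d ∣ n)
    (h : a + b + d ≤ 2 * n) : a + d ≤ n ∨ b + d ≤ n := by
  obtain ⟨a, rfl⟩ := ha
  obtain ⟨b, rfl⟩ := hb
  obtain ⟨n, rfl⟩ := hn
  have hab : a + b + 1 ≤ 2 * n := Nat.le_of_mul_le_mul_left (by linarith) hd
  rcases (by omega : a + 1 ≤ n ∨ b + 1 ≤ n) with h | h
  · exact .inl (by nlinarith)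
  · exact .inr (by nlinarith)

lemma exists_subset_sum_two_pow_le (k : ι → ℕ) (z : ℕ) (s : Finset ι) (hk : ∀ i ∈ s, k i ≤ z)
    (hs : ∑ i ∈ s, 2 ^ k i ≤ 2 ^ (z + 1)) :
    ∃ t ⊆ s, ∑ i ∈ t, 2 ^ k i ≤ 2 ^ z ∧ ∑ i ∈ s \ t, 2 ^ k i ≤ 2 ^ z := by
  induction s using Finset.induction_on_min_value k with
  | empty => exact ⟨∅, by simp⟩
  | insert a s ha hmin ih =>
    rw [sum_insert ha] at hs
    obtain ⟨t, hts, ht, hst⟩ := ih (fun i hi => hk i (mem_insert_of_mem hi)) (le_add_self.trans hs)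
    have hat : a ∉ t := fun h => ha (hts h)
    have hdvd : ∀ u ⊆ s, 2 ^ k a ∣ ∑ i ∈ u, 2 ^ k i := fun u hu =>
      dvd_sum fun i hi => pow_dvd_pow 2 (hmin i (hu hi))
    have hsum : ∑ i ∈ s \ t, 2 ^ k i + ∑ i ∈ t, 2 ^ k i = ∑ i ∈ s, 2 ^ k i := sum_sdiff hts
    rcases add_le_or_add_le_of_dvd (by positivity) (hdvd t hts) (hdvd (s \ t) sdiff_subset)
        (pow_dvd_pow 2 (hk a (mem_insert_self a s))) (by rw [← pow_succ']; omega) with h | h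
    · refine ⟨insert a t, insert_subset_insert a hts, by rw [sum_insert hat]; omega, ?_⟩
      rwa [Finset.insert_sdiff_insert, Finset.sdiff_insert_of_notMem ha]
    · refine ⟨t, hts.trans (subset_insert a s), ht, ?_⟩
      rw [Finset.insert_sdiff_of_notMem _ hat, sum_insert fun h => ha (mem_sdiff.1 h).1]
      omega

lemma le_mul_two_pow_of_sum_two_pow_le (N : Finset ι → ℝ)
    (hN : ∀ s t, Disjoint s t → N (s ∪ t) ≤ 2 * max (N s) (N t)) {c : ℝ} (hc : 0 ≤ c)
    (k : ι → ℕ) (hk : ∀ i, N {i} ≤ c * 2 ^ k i) (z : ℕ) {s : Finset ι} (hs : s.Nonempty)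
    (hsum : ∑ i ∈ s, 2 ^ k i ≤ 2 ^ z) : N s ≤ c * 2 ^ z := by
  have single : ∀ i z, 2 ^ k i ≤ 2 ^ z → N {i} ≤ c * 2 ^ z := fun i z h =>
    (hk i).trans (mul_le_mul_of_nonneg_left (by exact_mod_cast h) hc)
  have lt_sum : ∀ s : Finset ι, s.Nontrivial → ∀ i ∈ s, 2 ^ k i < ∑ j ∈ s, 2 ^ k j :=
    fun s hs i hi =>
      have ⟨j, hj, hji⟩ := hs.exists_ne i
      single_lt_sum (f := fun j => 2 ^ k j) hji hi hj (by positivity) fun _ _ _ => Nat.zero_le _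
  induction z generalizing s with
  | zero =>
    rcases hs.exists_eq_singleton_or_nontrivial with ⟨i, rfl⟩ | hnt
    · exact single i 0 (by simpa using hsum)
    · obtain ⟨i, hi⟩ := hs
      simpa using (lt_sum s hnt i hi).trans_le hsum
  | succ z ih =>
    rcases hs.exists_eq_singleton_or_nontrivial with ⟨i, rfl⟩ | hnt
    · exact single i _ (by simpa using hsum)
    have hkz : ∀ i ∈ s, k i ≤ z := fun i hi => Nat.lt_succ_iff.1 <|
      (Nat.pow_lt_pow_iff_right (by norm_num)).1 ((lt_sum s hnt i hi).trans_le hsum)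
    obtain ⟨t, hts, ht, hst⟩ := exists_subset_sum_two_pow_le k z s hkz hsum
    have hz : c * 2 ^ z ≤ c * 2 ^ (z + 1) := by gcongr <;> norm_num
    rcases t.eq_empty_or_nonempty with rfl | ht₀
    · rw [Finset.sdiff_empty] at hst
      exact (ih hs hst).trans hz
    rcases (s \ t).eq_empty_or_nonempty with hst₀ | hst₀
    · rw [(sdiff_eq_empty_iff_subset.1 hst₀).antisymm hts]
      exact (ih ht₀ ht).trans hz
    calc N s = N (t ∪ s \ t) := by rw [union_sdiff_of_subset hts]
      _ ≤ 2 * max (N t) (N (s \ t)) := hN _ _ disjoint_sdiff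
      _ ≤ 2 * (c * 2 ^ z) := by gcongr; exact max_le (ih ht₀ ht) (ih hst₀ hst)
      _ = c * 2 ^ (z + 1) := by ring

lemma exists_le_mul_two_pow_le {x c : ℝ} (hx : 0 ≤ x) (hc : 0 < c) :
    ∃ k : ℕ, x ≤ c * 2 ^ k ∧ c * 2 ^ k ≤ c + 2 * x := by
  rcases le_or_gt x c with h | h
  · exact ⟨0, by simpa using h, by simpa using hx⟩
  obtain ⟨n, hn, hn'⟩ := exists_nat_pow_near ((one_le_div hc).2 h.le) one_lt_two
  rw [le_div_iff₀ hc] at hn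
  rw [div_lt_iff₀ hc] at hn'
  exact ⟨n + 1, by linarith, by rw [pow_succ]; linarith⟩

lemma le_four_mul_sum_of_le_two_mul_max (N : Finset ι → ℝ)
    (hN : ∀ s t, Disjoint s t → N (s ∪ t) ≤ 2 * max (N s) (N t)) (hN₀ : ∀ i, 0 ≤ N {i})
    {s : Finset ι} (hs : s.Nonempty) : N s ≤ 4 * ∑ i ∈ s, N {i} := by
  refine le_of_forall_pos_le_add fun ε hε => ?_
  have hcard : (0 : ℝ) < s.card := by exact_mod_cast hs.card_pos
  set c := ε / (2 * s.card)
  have hc : 0 < c := by positivity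
  choose k hk hk' using fun i => exists_le_mul_two_pow_le (hN₀ i) hc
  set W := ∑ i ∈ s, 2 ^ k i
  have hW : 2 ^ Nat.log 2 W ≤ W := Nat.pow_log_le_self 2 (sum_pos (fun _ _ => by positivity) hs).ne'
  calc N s ≤ c * 2 ^ (Nat.log 2 W + 1) :=
        le_mul_two_pow_of_sum_two_pow_le N hN hc.le k hk _ hs (Nat.lt_pow_succ_log_self one_lt_two W).le
    _ ≤ 2 * ∑ i ∈ s, c * 2 ^ k i := by
        rw [← mul_sum, pow_succ]
        have : (2 : ℝ) ^ Nat.log 2 W ≤ ∑ i ∈ s, (2 : ℝ) ^ k i := by exact_mod_cast hW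
        nlinarith
    _ ≤ 2 * ∑ i ∈ s, (c + 2 * N {i}) := by gcongr with i; exact hk' i
    _ = 4 * ∑ i ∈ s, N {i} + ε := by
        rw [sum_add_distrib, ← mul_sum, sum_const, nsmul_eq_mul]
        simp only [c]
        field_simp
        ring

lemma rpow_le_two_mul_max_rpow {K r w x y : ℝ} (hK : 0 ≤ K) (hr : 0 ≤ r)
    (hKr : (2 * K) ^ r = 2) (hw : 0 ≤ w) (hx : 0 ≤ x) (hy : 0 ≤ y) (h : w ≤ K * (x + y)) :
    w ^ r ≤ 2 * max (x ^ r) (y ^ r) :=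
  calc w ^ r ≤ (2 * K * max x y) ^ r := by
        gcongr
        nlinarith [le_max_left x y, le_max_right x y]
    _ = 2 * max (x ^ r) (y ^ r) := by
        rw [Real.mul_rpow (by positivity) (le_max_of_le_left hx), hKr, Real.rpow_max hx hy hr]

lemma rpow_le_four_mul_sum_rpow (ρ : Finset ι → ℝ) (hρ : ∀ s, 0 ≤ ρ s) {K r : ℝ} (hK : 0 ≤ K)
    (hr : 0 ≤ r) (hKr : (2 * K) ^ r = 2)
    (hquasi : ∀ s t, Disjoint s t → ρ (s ∪ t) ≤ K * (ρ s + ρ t)) {s : Finset ι}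
    (hs : s.Nonempty) : ρ s ^ r ≤ 4 * ∑ i ∈ s, ρ {i} ^ r :=
  le_four_mul_sum_of_le_two_mul_max (fun s => ρ s ^ r)
    (fun s t hst => rpow_le_two_mul_max_rpow hK hr hKr (hρ _) (hρ s) (hρ t) (hquasi s t hst))
    (fun _ => Real.rpow_nonneg (hρ _) r) hs

end AokiRolewicz

section WeakType

variable [NNNorm ε] {μ : Measure α} {f : α → ε}

lemma rearr_antitone : Antitone (rearr μ f) := fun _ _ hst =>
  sInf_le_sInf fun _ hs => le_trans hs hst

lemma measure_le_of_rearr_lt {t c : ℝ≥0∞} (h : rearr μ f t < c) :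
    μ {x | c ≤ (‖f x‖₊ : ℝ≥0∞)} ≤ t := by
  obtain ⟨s, hs, hsc⟩ := sInf_lt_iff.mp h
  exact (measure_mono fun x hx => hsc.trans_le hx).trans hs

lemma rpow_mul_rearr_le_lorentzNorm_top (q t : ℝ≥0∞) :
    t ^ (1 / q).toReal * rearr μ f t ≤ lorentzNorm μ q ∞ f := by
  by_cases hq : q = ∞
  · simpa [lorentzNorm, hq] using rearr_antitone (zero_le : (0 : ℝ≥0∞) ≤ t)
  · rw [lorentzNorm, if_neg hq, if_pos rfl]
    exact le_iSup (fun s : ℝ≥0∞ => s ^ (1 / q).toReal * rearr μ f s) t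

lemma tendstoInMeasure_of_tendsto_lorentzNorm {E ι : Type*} [NormedAddCommGroup E] {l : Filter ι}
    {q : ℝ≥0∞} {g : ι → α → E} (h : Tendsto (fun i => lorentzNorm μ q ∞ (g i)) l (𝓝 0)) :
    TendstoInMeasure μ g l 0 := by
  intro e he
  rw [ENNReal.tendsto_nhds_zero]
  intro δ hδ
  -- capped at `1` so that `t ^ (1 / q)` is finite
  set t := min δ 1
  have ht : 0 < t := lt_min hδ one_pos
  have ht' : t ≠ ∞ := ne_top_of_le_ne_top one_ne_top (min_le_right _ _)
  have hpow : t ^ (1 / q).toReal ≠ 0 := (ENNReal.rpow_pos ht ht').ne'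
  have hpow' : t ^ (1 / q).toReal ≠ ∞ := ENNReal.rpow_ne_top_of_nonneg toReal_nonneg ht'
  filter_upwards [h.eventually_lt_const (ENNReal.mul_pos hpow he.ne')] with i hi
  have hr : rearr μ (g i) t < e :=
    (ENNReal.mul_lt_mul_iff_right hpow hpow').1 ((rpow_mul_rearr_le_lorentzNorm_top q t).trans_lt hi)
  simpa [edist_zero_right, enorm_eq_nnnorm] using (measure_le_of_rearr_lt hr).trans (min_le_left _ _)

end WeakType

section Operator

open Finset

variable {X Y : Type*} [MeasurableSpace X] [MeasurableSpace Y] {μ : Measure X} {ν : Measure Y}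
  {p : ℝ≥0∞} {T : (X → ℂ) → (Y → ℂ)} {K : ℝ}

lemma ae_nnnorm_rpow_le_four_mul_sum (hK : 0 ≤ K)
    (hquasi : ∀ f g, MemLp f p μ → MemLp g p μ →
      ∀ᵐ y ∂ν, ‖T (f + g) y‖ ≤ K * (‖T f y‖ + ‖T g y‖))
    {r : ℝ} (hr : 0 ≤ r) (hKr : (2 * K) ^ r = 2) {g : ℕ → X → ℂ} (hg : ∀ i, MemLp (g i) p μ) :
    ∀ᵐ y ∂ν, ∀ s : Finset ℕ, s.Nonempty →
      (‖T (∑ i ∈ s, g i) y‖₊ : ℝ≥0∞) ^ r ≤ 4 * ∑ i ∈ s, (‖T (g i) y‖₊ : ℝ≥0∞) ^ r := by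
  have hsum : ∀ s : Finset ℕ, MemLp (∑ i ∈ s, g i) p μ := fun s => memLp_finsetSum' s fun i _ => hg i
  have hquasi' : ∀ᵐ y ∂ν, ∀ s t : Finset ℕ, Disjoint s t →
      ‖T (∑ i ∈ s ∪ t, g i) y‖ ≤ K * (‖T (∑ i ∈ s, g i) y‖ + ‖T (∑ i ∈ t, g i) y‖) := by
    simp only [ae_all_iff]
    intro s t hst
    filter_upwards [hquasi _ _ (hsum s) (hsum t)] with y hy
    rwa [sum_union hst]
  filter_upwards [hquasi'] with y hy s hs
  have key := rpow_le_four_mul_sum_rpow (fun s => ‖T (∑ i ∈ s, g i) y‖) (fun _ => norm_nonneg _)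
    hK hr hKr hy hs
  simp only [sum_singleton] at key
  have hofReal : ∀ z : ℂ, (‖z‖₊ : ℝ≥0∞) ^ r = ENNReal.ofReal (‖z‖ ^ r) := fun z => by
    rw [← enorm_eq_nnnorm, ← ofReal_norm, ENNReal.ofReal_rpow_of_nonneg (norm_nonneg _) hr]
  simp only [hofReal]
  rw [← ENNReal.ofReal_sum_of_nonneg fun _ _ => by positivity, ← ENNReal.ofReal_ofNat,
    ← ENNReal.ofReal_mul (by norm_num)]
  exact ENNReal.ofReal_le_ofReal key

lemma ae_nnnorm_rpow_le_four_mul_sum_add_tail (hK : 0 ≤ K)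
    (hquasi : ∀ f g, MemLp f p μ → MemLp g p μ →
      ∀ᵐ y ∂ν, ‖T (f + g) y‖ ≤ K * (‖T f y‖ + ‖T g y‖))
    {r : ℝ} (hr : 0 ≤ r) (hKr : (2 * K) ^ r = 2) {fs : ℕ → X → ℂ} {F : X → ℂ}
    (hfs : ∀ j, MemLp (fs j) p μ) (hF : MemLp F p μ) :
    ∀ᵐ y ∂ν, ∀ N, (‖T F y‖₊ : ℝ≥0∞) ^ r ≤ 4 * (∑ j ∈ range N, (‖T (fs j) y‖₊ : ℝ≥0∞) ^ r +
      (‖T (fun x => F x - ∑ j ∈ range N, fs j x) y‖₊ : ℝ≥0∞) ^ r) := by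
  refine ae_all_iff.2 fun N => ?_
  set tail : X → ℂ := fun x => F x - ∑ j ∈ range N, fs j x
  set g : ℕ → X → ℂ := fun i => if i < N then fs i else tail
  have htail : MemLp tail p μ := hF.sub (memLp_finsetSum _ fun j _ => hfs j)
  have hg : ∀ i, MemLp (g i) p μ := fun i => by by_cases hi : i < N <;> simp [g, hi, hfs, htail]
  have hgN : ∀ i ∈ range N, g i = fs i := fun i hi => if_pos (mem_range.1 hi)
  have hg_last : g N = tail := if_neg (lt_irrefl N)
  have hF_eq : ∑ i ∈ range (N + 1), g i = F := by
    rw [sum_range_succ, sum_congr rfl hgN, hg_last]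
    ext x
    simp [tail, Finset.sum_apply]
  filter_upwards [ae_nnnorm_rpow_le_four_mul_sum hK hquasi hr hKr hg] with y hy
  have := hy (range (N + 1)) nonempty_range_add_one
  rwa [hF_eq, sum_range_succ, hg_last, sum_congr rfl fun i hi => by rw [hgN i hi]] at this

end Operator

lemma le_mul_tsum_of_le_mul_sum_add {a c : ℝ≥0∞} (hc : c ≠ ∞) {b : ℕ → ℝ≥0∞} {n : ℕ → ℕ}
    {e : ℕ → ℝ≥0∞} (he : Tendsto e atTop (𝓝 0))
    (h : ∀ k, a ≤ c * (∑ j ∈ Finset.range (n k), b j + e k)) : a ≤ c * ∑' j, b j := by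
  have hlim : Tendsto (fun k => c * (∑' j, b j + e k)) atTop (𝓝 (c * ∑' j, b j)) := by
    simpa using ENNReal.Tendsto.const_mul (tendsto_const_nhds.add he) (Or.inr hc)
  exact ge_of_tendsto' hlim fun k => (h k).trans (by gcongr; exact ENNReal.sum_le_tsum _)

theorem stmt7_general {X Y : Type*} [MeasurableSpace X] [MeasurableSpace Y]
    (μ : Measure X) (ν : Measure Y)
    (p q : ℝ≥0∞)
    (T : (X → ℂ) → (Y → ℂ))
    -- quasi-additivity with constant K
    (K : ℝ) (hK : 1 ≤ K)
    (hquasi : ∀ f g, MemLp f p μ → MemLp g p μ →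
      ∀ᵐ y ∂ν, ‖T (f + g) y‖ ≤ K * (‖T f y‖ + ‖T g y‖))
    -- weak-type (p,q)
    (C : ℝ≥0∞) (hC : C < ∞)
    (hweak : ∀ f, MemLp f p μ → lorentzNorm ν q ∞ (T f) ≤ C * eLpNorm f p μ)
    (α : ℝ) (hα : 0 < α) (hKα : (2 * K) ^ α = 2)
    -- a series converging in L^p
    (fs : ℕ → X → ℂ) (F : X → ℂ) (hfs : ∀ j, MemLp (fs j) p μ) (hF : MemLp F p μ)
    (hconv : Tendsto
      (fun N => eLpNorm (fun x => F x - ∑ j ∈ Finset.range N, fs j x) p μ) atTop (𝓝 0)) :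
    ∀ᵐ y ∂ν, (‖T F y‖₊ : ℝ≥0∞) ^ α ≤ 4 * ∑' j, (‖T (fs j) y‖₊ : ℝ≥0∞) ^ α := by
  set G : ℕ → X → ℂ := fun N x => F x - ∑ j ∈ Finset.range N, fs j x
  have hG : ∀ N, MemLp (G N) p μ := fun N => hF.sub (memLp_finsetSum _ fun j _ => hfs j)
  have hTG : TendstoInMeasure ν (fun N => T (G N)) atTop 0 :=
    tendstoInMeasure_of_tendsto_lorentzNorm <| tendsto_of_tendsto_of_tendsto_of_le_of_le
      tendsto_const_nhds (by simpa using ENNReal.Tendsto.const_mul hconv (Or.inr hC.ne))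
      (fun _ => zero_le) fun N => hweak _ (hG N)
  obtain ⟨ns, -, hns⟩ := hTG.exists_seq_tendsto_ae
  filter_upwards [ae_nnnorm_rpow_le_four_mul_sum_add_tail (by linarith) hquasi hα.le hKα hfs hF,
    hns] with y hy hy₀
  refine le_mul_tsum_of_le_mul_sum_add (by norm_num) ?_ fun k => hy (ns k)
  have hy₀' : Tendsto (fun k => ‖T (G (ns k)) y‖ₑ) atTop (𝓝 0) := by simpa using hy₀.enorm
  simpa [Function.comp_def, ENNReal.zero_rpow_of_pos hα, enorm_eq_nnnorm] using
    ((ENNReal.continuous_rpow_const (y := α)).tendsto 0).comp hy₀'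

/-- A quasi-additive operator of weak-type `(p,q)` is countably `α`-quasi-additive on
`L^p`, where `(2K)^α = 2`. -/
theorem stmt7 {X Y : Type*} [MeasurableSpace X] [MeasurableSpace Y]
    (μ : Measure X) (ν : Measure Y) [SigmaFinite μ] [SigmaFinite ν]
    (p q : ℝ≥0∞) (hp : 0 < p) (hp' : p ≠ ∞) (hq : 0 < q)
    (T : (X → ℂ) → (Y → ℂ))
    -- values in measurable functions
    (hTm : ∀ f, MemLp f p μ → Measurable (T f))
    -- quasi-additivity with constant K
    (K : ℝ) (hK : 1 ≤ K)
    (hquasi : ∀ f g, MemLp f p μ → MemLp g p μ →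
      ∀ᵐ y ∂ν, ‖T (f + g) y‖ ≤ K * (‖T f y‖ + ‖T g y‖))
    -- weak-type (p,q)
    (C : ℝ≥0∞) (hC : C < ∞)
    (hweak : ∀ f, MemLp f p μ → lorentzNorm ν q ∞ (T f) ≤ C * eLpNorm f p μ)
    (α : ℝ) (hα : 0 < α) (hKα : (2 * K) ^ α = 2)
    -- a series converging in L^p
    (fs : ℕ → X → ℂ) (F : X → ℂ) (hfs : ∀ j, MemLp (fs j) p μ) (hF : MemLp F p μ)
    (hconv : Tendsto
      (fun N => eLpNorm (fun x => F x - ∑ j ∈ Finset.range N, fs j x) p μ) atTop (𝓝 0)) :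
    ∀ᵐ y ∂ν, (‖T F y‖₊ : ℝ≥0∞) ^ α ≤ 4 * ∑' j, (‖T (fs j) y‖₊ : ℝ≥0∞) ^ α :=
  stmt7_general μ ν p q T K hK hquasi C hC hweak α hα hKα fs F hfs hF hconv

end Paper
end
end

section
/- For any measurable f on a finite measure space (X,μ) and α > 0, with S_k = {x : 2^k ≤ |f(x)| < 2^{k+1}} for k ≥ 1: ∑_{k≥k₀} 2^{k+1} k^α μ(S_k)^{k/(k+1)} ≤ C(α,k₀) + 8 ∑_{k≥k₀} 2^k k^α μ(S_k), where C(α,k₀) = 2∑_{k≥k₀} 2^{k+1} k^α 4^{-k} < ∞, and consequently this sum is bounded by C(α,k₀) + C' ∫_X |f|(log₂⁺|f|)^α dμ for a universal constant C' depending on α. -/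
open MeasureTheory Filter Set Topology ENNReal

noncomputable section
namespace Paper

variable {α : Type*} [MeasurableSpace α]

/-- The level set `S_k = {x : 2^k ≤ |f(x)| < 2^{k+1}}`. -/
def Sk (f : α → ℝ) (k : ℕ) : Set α :=
  {x | (2 : ℝ) ^ k ≤ |f x| ∧ |f x| < 2 ^ (k + 1)}

/-- The constant `C(α,k₀) = 2 ∑_{k ≥ k₀} 2^{k+1} k^α 4^{-k}`. -/
def yanoC (a : ℝ) (k₀ : ℕ) : ℝ≥0∞ :=
  2 * ∑' k : ℕ, if k₀ ≤ k then
    (2 : ℝ≥0∞) ^ (k + 1) * (k : ℝ≥0∞) ^ a * (4 : ℝ≥0∞) ^ (-(k : ℝ)) else 0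

/-!
Termwise, `m^{k/(k+1)} ≤ 4^{-k} + 4m` (split according to whether `m` is below or above
`4^{-(k+1)}`) bounds the left-hand sum by `C(α,k₀) + 8 ∑ 2^k k^α μ(S_k)`. The constant is finite
because `2^{k+1} 4^{-k} = 2 · 2^{-k}` beats the polynomial growth of `k^α`. Finally, on `S_k` the
integrand `|f| (log₂⁺|f|)^α` is at least `2^k k^α`, and the `S_k` are disjoint, so
`∑ 2^k k^α μ(S_k) ≤ ∫ |f| (log₂⁺|f|)^α dμ`.
-/

open Function

lemma _root_.ENNReal.rpow_le_rpow_add_rpow_sub_one_mul {θ : ℝ} (hθ₀ : 0 ≤ θ) (hθ₁ : θ ≤ 1)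
    (c : ℝ≥0∞) {m : ℝ≥0∞} (hm : m ≠ ∞) : m ^ θ ≤ c ^ θ + c ^ (θ - 1) * m := by
  rcases le_or_gt m c with hmc | hcm
  · exact (ENNReal.rpow_le_rpow hmc hθ₀).trans le_self_add
  · have hm₀ : m ≠ 0 := (zero_le.trans_lt hcm).ne'
    have hneg : m ^ (θ - 1) ≤ c ^ (θ - 1) := by
      rw [← neg_sub, ENNReal.rpow_neg, ENNReal.rpow_neg]
      exact ENNReal.inv_le_inv.mpr (ENNReal.rpow_le_rpow hcm.le (by linarith))
    calc m ^ θ = m ^ (θ - 1) * m := by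
          conv_lhs => rw [← sub_add_cancel θ 1, ENNReal.rpow_add _ _ hm₀ hm, ENNReal.rpow_one]
      _ ≤ c ^ (θ - 1) * m := by gcongr
      _ ≤ _ := le_add_self

lemma rpow_div_succ_le (k : ℕ) {m : ℝ≥0∞} (hm : m ≠ ∞) :
    m ^ ((k : ℝ) / (k + 1)) ≤ 4 ^ (-(k : ℝ)) + 4 * m := by
  have hk : (0 : ℝ) < k + 1 := by positivity
  have h := ENNReal.rpow_le_rpow_add_rpow_sub_one_mul (θ := k / (k + 1)) (by positivity)
    ((div_le_one hk).mpr (by linarith)) ((4 : ℝ≥0∞) ^ (-((k : ℝ) + 1))) hm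
  have hθ : -((k : ℝ) + 1) * (k / (k + 1)) = -k := by field_simp
  have hθ' : -((k : ℝ) + 1) * (k / (k + 1) - 1) = 1 := by field_simp; ring
  rwa [← ENNReal.rpow_mul, ← ENNReal.rpow_mul, hθ, hθ', ENNReal.rpow_one] at h

lemma _root_.ENNReal.natCast_rpow_le_pow_ceil {a : ℝ} (ha : 0 ≤ a) (k : ℕ) :
    (k : ℝ≥0∞) ^ a ≤ (k : ℝ≥0∞) ^ ⌈a⌉₊ := by
  rcases k.eq_zero_or_pos with rfl | hk
  · rcases ha.eq_or_lt with rfl | ha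
    · simp
    · simp [ENNReal.zero_rpow_of_pos ha]
  · rw [← ENNReal.rpow_natCast]
    exact ENNReal.rpow_le_rpow_of_exponent_le (by exact_mod_cast hk) (Nat.le_ceil a)

lemma _root_.ENNReal.tsum_natCast_pow_mul_geometric_ne_top (n : ℕ) {r : ℝ≥0∞} (hr : r < 1) :
    ∑' k : ℕ, (k : ℝ≥0∞) ^ n * r ^ k ≠ ∞ := by
  lift r to NNReal using hr.ne_top
  have hs : Summable fun k : ℕ => ((k : NNReal) ^ n * r ^ k : NNReal) := by
    rw [← NNReal.summable_coe]
    push_cast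
    exact summable_pow_mul_geometric_of_norm_lt_one n (by simpa using hr)
  simpa using ENNReal.tsum_coe_ne_top_iff_summable.mpr hs

lemma two_pow_succ_mul_four_rpow_neg (k : ℕ) :
    (2 : ℝ≥0∞) ^ (k + 1) * 4 ^ (-(k : ℝ)) = 2 * 2⁻¹ ^ k := by
  rw [ENNReal.rpow_neg, ENNReal.rpow_natCast, show (4 : ℝ≥0∞) = 2 * 2 by norm_num, mul_pow,
    ENNReal.mul_inv (by simp) (by simp), ← ENNReal.inv_pow, pow_succ,
    ← mul_assoc, mul_comm _ 2, mul_assoc, mul_assoc, ← mul_assoc (2 ^ k),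
    ENNReal.mul_inv_cancel (by simp) (by simp), one_mul]

lemma yanoC_lt_top {a : ℝ} (ha : 0 ≤ a) (k₀ : ℕ) : yanoC a k₀ < ∞ := by
  have hterm (k : ℕ) : (if k₀ ≤ k then
      (2 : ℝ≥0∞) ^ (k + 1) * (k : ℝ≥0∞) ^ a * (4 : ℝ≥0∞) ^ (-(k : ℝ)) else 0)
      ≤ 2 * ((k : ℝ≥0∞) ^ ⌈a⌉₊ * 2⁻¹ ^ k) := by
    split_ifs
    · calc (2 : ℝ≥0∞) ^ (k + 1) * (k : ℝ≥0∞) ^ a * 4 ^ (-(k : ℝ))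
          = 2 * 2⁻¹ ^ k * (k : ℝ≥0∞) ^ a := by
            rw [mul_right_comm, two_pow_succ_mul_four_rpow_neg]
        _ ≤ 2 * 2⁻¹ ^ k * (k : ℝ≥0∞) ^ ⌈a⌉₊ := by
            gcongr; exact ENNReal.natCast_rpow_le_pow_ceil ha k
        _ = 2 * ((k : ℝ≥0∞) ^ ⌈a⌉₊ * 2⁻¹ ^ k) := by ring
    · exact zero_le
  refine ENNReal.mul_lt_top (by norm_num) ((ENNReal.tsum_le_tsum hterm).trans_lt ?_)
  rw [ENNReal.tsum_mul_left]
  exact ENNReal.mul_lt_top (by norm_num)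
    (ENNReal.tsum_natCast_pow_mul_geometric_ne_top _ (by norm_num)).lt_top

lemma tsum_rpow_div_succ_le_yanoC_add (a : ℝ) (k₀ : ℕ) {m : ℕ → ℝ≥0∞} (hm : ∀ k, m k ≠ ∞) :
    (∑' k : ℕ, if k₀ ≤ k then
        (2 : ℝ≥0∞) ^ (k + 1) * (k : ℝ≥0∞) ^ a * m k ^ ((k : ℝ) / ((k : ℝ) + 1)) else 0)
      ≤ yanoC a k₀ +
        8 * ∑' k : ℕ, if k₀ ≤ k then (2 : ℝ≥0∞) ^ k * (k : ℝ≥0∞) ^ a * m k else 0 := by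
  have hterm (k : ℕ) : (if k₀ ≤ k then
      (2 : ℝ≥0∞) ^ (k + 1) * (k : ℝ≥0∞) ^ a * m k ^ ((k : ℝ) / ((k : ℝ) + 1)) else 0)
      ≤ (if k₀ ≤ k then
          (2 : ℝ≥0∞) ^ (k + 1) * (k : ℝ≥0∞) ^ a * (4 : ℝ≥0∞) ^ (-(k : ℝ)) else 0)
        + 8 * (if k₀ ≤ k then (2 : ℝ≥0∞) ^ k * (k : ℝ≥0∞) ^ a * m k else 0) := by
    split_ifs
    · calc (2 : ℝ≥0∞) ^ (k + 1) * (k : ℝ≥0∞) ^ a * m k ^ ((k : ℝ) / ((k : ℝ) + 1))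
          ≤ 2 ^ (k + 1) * (k : ℝ≥0∞) ^ a * (4 ^ (-(k : ℝ)) + 4 * m k) := by
            gcongr; exact rpow_div_succ_le k (hm k)
        _ = _ := by rw [pow_succ]; ring
    · simp
  calc _ ≤ _ := ENNReal.tsum_le_tsum hterm
    _ = _ := by rw [ENNReal.tsum_add, ENNReal.tsum_mul_left]
    _ ≤ _ := by
      gcongr
      exact le_mul_of_one_le_left' one_le_two

lemma _root_.MeasureTheory.tsum_mul_measure_le_lintegral {ι : Type*} [Countable ι]
    {μ : Measure α} {s : ι → Set α} (hs : ∀ i, MeasurableSet (s i))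
    (hd : Pairwise (Disjoint on s)) {c : ι → ℝ≥0∞} {g : α → ℝ≥0∞}
    (hcg : ∀ i, ∀ x ∈ s i, c i ≤ g x) :
    ∑' i, c i * μ (s i) ≤ ∫⁻ x, g x ∂μ :=
  calc ∑' i, c i * μ (s i) = ∑' i, ∫⁻ _ in s i, c i ∂μ := by simp only [setLIntegral_const]
    _ ≤ ∑' i, ∫⁻ x in s i, g x ∂μ :=
      ENNReal.tsum_le_tsum fun i => setLIntegral_mono' (hs i) (hcg i)
    _ = ∫⁻ x in ⋃ i, s i, g x ∂μ := (lintegral_iUnion hs hd g).symm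
    _ ≤ ∫⁻ x, g x ∂μ := setLIntegral_le_lintegral _ _

lemma measurableSet_Sk {f : α → ℝ} (hf : Measurable f) (k : ℕ) :
    MeasurableSet (Sk f k) :=
  (measurableSet_le measurable_const hf.abs).inter (measurableSet_lt hf.abs measurable_const)

lemma pairwise_disjoint_Sk {β : Type*} (f : β → ℝ) :
    Pairwise (Disjoint on Sk f) := by
  refine (pairwise_disjoint_on _).mpr fun j k hjk => Set.disjoint_left.mpr ?_
  rintro x ⟨-, hxj⟩ ⟨hxk, -⟩
  have : (2 : ℝ) ^ (j + 1) ≤ 2 ^ k := pow_le_pow_right₀ one_le_two hjk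
  linarith

lemma two_pow_mul_rpow_le_ofReal_mul_logb {a : ℝ} (ha : 0 ≤ a) {k : ℕ} {t : ℝ}
    (ht : (2 : ℝ) ^ k ≤ |t|) :
    (2 : ℝ≥0∞) ^ k * (k : ℝ≥0∞) ^ a ≤ ENNReal.ofReal (|t| * (max 0 (Real.logb 2 |t|)) ^ a) := by
  have hlog : (k : ℝ) ≤ Real.logb 2 |t| := by
    rwa [Real.le_logb_iff_rpow_le one_lt_two ((pow_pos two_pos k).trans_le ht),
      Real.rpow_natCast]
  have h2 : ENNReal.ofReal ((2 : ℝ) ^ k) = 2 ^ k := by simp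
  rw [← ENNReal.ofReal_natCast, ENNReal.ofReal_rpow_of_nonneg k.cast_nonneg ha, ← h2,
    ← ENNReal.ofReal_mul (by positivity)]
  exact ENNReal.ofReal_le_ofReal (mul_le_mul ht (Real.rpow_le_rpow k.cast_nonneg
    (le_max_of_le_right hlog) ha) (by positivity) (abs_nonneg t))

lemma tsum_two_pow_mul_measure_Sk_le_lintegral (μ : Measure α)
    {f : α → ℝ} (hf : Measurable f) {a : ℝ} (ha : 0 ≤ a) (k₀ : ℕ) :
    (∑' k : ℕ, if k₀ ≤ k then (2 : ℝ≥0∞) ^ k * (k : ℝ≥0∞) ^ a * μ (Sk f k) else 0)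
      ≤ ∫⁻ x, ENNReal.ofReal (|f x| * (max 0 (Real.logb 2 |f x|)) ^ a) ∂μ := by
  calc _ = ∑' k : ℕ, (if k₀ ≤ k then (2 : ℝ≥0∞) ^ k * (k : ℝ≥0∞) ^ a else 0) * μ (Sk f k) := by
        simp only [ite_zero_mul]
    _ ≤ _ := tsum_mul_measure_le_lintegral (measurableSet_Sk hf) (pairwise_disjoint_Sk f)
        fun k x hx => by
          split_ifs
          · exact two_pow_mul_rpow_le_ofReal_mul_logb ha hx.1
          · exact zero_le

theorem stmt13_general (a : ℝ) (ha : 0 < a) (k₀ : ℕ) :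
    ∃ C' : ℝ≥0∞, C' < ∞ ∧
      ∀ (X : Type) (_ : MeasurableSpace X) (μ : Measure X), IsFiniteMeasure μ →
        ∀ f : X → ℝ, Measurable f →
          yanoC a k₀ < ∞ ∧
          ((∑' k : ℕ, if k₀ ≤ k then
              (2 : ℝ≥0∞) ^ (k + 1) * (k : ℝ≥0∞) ^ a *
                μ (Sk f k) ^ ((k : ℝ) / ((k : ℝ) + 1)) else 0)
            ≤ yanoC a k₀ +
              8 * ∑' k : ℕ, if k₀ ≤ k then
                (2 : ℝ≥0∞) ^ k * (k : ℝ≥0∞) ^ a * μ (Sk f k) else 0) ∧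
          ((∑' k : ℕ, if k₀ ≤ k then
              (2 : ℝ≥0∞) ^ (k + 1) * (k : ℝ≥0∞) ^ a *
                μ (Sk f k) ^ ((k : ℝ) / ((k : ℝ) + 1)) else 0)
            ≤ yanoC a k₀ +
              C' * ∫⁻ x, ENNReal.ofReal (|f x| * (max 0 (Real.logb 2 |f x|)) ^ a) ∂μ) := by
  refine ⟨8, by norm_num, fun X _ μ _ f hf => ?_⟩
  have hyoung := tsum_rpow_div_succ_le_yanoC_add a k₀ fun k => measure_ne_top μ (Sk f k)
  refine ⟨yanoC_lt_top ha.le k₀, hyoung, hyoung.trans ?_⟩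
  gcongr
  exact tsum_two_pow_mul_measure_Sk_le_lintegral μ hf ha.le k₀

/-- The elementary estimate in the proof of Yano's theorem:
`∑_{k≥k₀} 2^{k+1} k^α μ(S_k)^{k/(k+1)} ≤ C(α,k₀) + 8 ∑_{k≥k₀} 2^k k^α μ(S_k)`, with
`C(α,k₀) < ∞`, and consequently the sum is bounded by
`C(α,k₀) + C' ∫ |f| (log₂⁺|f|)^α dμ` for a constant `C'` depending only on `α`. -/
theorem stmt13 (a : ℝ) (ha : 0 < a) (k₀ : ℕ) (hk₀ : 1 ≤ k₀) :
    ∃ C' : ℝ≥0∞, C' < ∞ ∧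
      ∀ (X : Type) (_ : MeasurableSpace X) (μ : Measure X), IsFiniteMeasure μ →
        ∀ f : X → ℝ, Measurable f →
          yanoC a k₀ < ∞ ∧
          ((∑' k : ℕ, if k₀ ≤ k then
              (2 : ℝ≥0∞) ^ (k + 1) * (k : ℝ≥0∞) ^ a *
                μ (Sk f k) ^ ((k : ℝ) / ((k : ℝ) + 1)) else 0)
            ≤ yanoC a k₀ +
              8 * ∑' k : ℕ, if k₀ ≤ k then
                (2 : ℝ≥0∞) ^ k * (k : ℝ≥0∞) ^ a * μ (Sk f k) else 0) ∧
          ((∑' k : ℕ, if k₀ ≤ k then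
              (2 : ℝ≥0∞) ^ (k + 1) * (k : ℝ≥0∞) ^ a *
                μ (Sk f k) ^ ((k : ℝ) / ((k : ℝ) + 1)) else 0)
            ≤ yanoC a k₀ +
              C' * ∫⁻ x, ENNReal.ofReal (|f x| * (max 0 (Real.logb 2 |f x|)) ^ a) ∂μ) :=
  stmt13_general a ha k₀

end Paper
end
end
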